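/- With the notation of the parafermionic polynomial: fix N ≥ 1, m ≥ 1, 0 ≤ k_j ≤ k ≤ N with k₁+k₂+k₃=2k, n = mN−k, and let P(x₁,x₂,x₃|t₁,…,t_n) be the symmetrization over the t-variables of the basic monomial p defined via groups s_q and sets χ₁,χ₂,χ₃. Then for each j ∈ {1,2,3}, P(x₁,x₂,x₃ | x_j,…,x_j (N+1−k_j copies), t₁,…,t_{n+k_j−N−1}) = 0 identically. -/

import Mathlib

/-!
In every term `p(t ∘ σ)` of the symmetrization, the `N + 1 - k_a` variables equal to `x_a` either
include two of the same group, killing the Vandermonde factor, or lie in pairwise distinct groups.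
Only the groups of `χ_a` and `χ₄` lack the factor `t - x_a`, and there are just
`(k - k_a) + (N - k) = N - k_a` of them, so by pigeonhole one of these variables sits in a group
whose factor `t - x_a` vanishes.
-/

open Finset

/-- The basic monomial `p(x₁,x₂,x₃|t₁,…,t_n)` of the parafermionic polynomial.
The `n` variables are divided into `N` groups by `grp`; the group of index `q`
belongs to the set `χ_{chi q + 1}` (value `3` meaning the set `χ₄`). -/
def basicMonomial (n N : ℕ) (grp : Fin n → Fin N) (chi : Fin N → Fin 4)
    (x : Fin 3 → ℝ) (t : Fin n → ℝ) : ℝ :=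
  (∏ i : Fin n, ∏ j : Fin n, if i < j ∧ grp i = grp j then (t i - t j) ^ 2 else 1) *
  ∏ j : Fin n,
    (if chi (grp j) = 0 then (t j - x 1) * (t j - x 2)
     else if chi (grp j) = 1 then (t j - x 0) * (t j - x 2)
     else if chi (grp j) = 2 then (t j - x 0) * (t j - x 1)
     else 1)

/-- The symmetrization of the basic monomial over the variables `t₁,…,t_n`. -/
def symMonomial (n N : ℕ) (grp : Fin n → Fin N) (chi : Fin N → Fin 4)
    (x : Fin 3 → ℝ) (t : Fin n → ℝ) : ℝ :=
  ∑ σ : Equiv.Perm (Fin n), basicMonomial n N grp chi x (t ∘ σ)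

/-- The configuration data of the parafermionic polynomial `𝐏_m^{(N|k₁,k₂,k₃)}`:
the groups in `χ₄` (i.e. `chi q = 3`) have `m` elements, the others `m−1` elements;
`χ₁, χ₂, χ₃` contain `k−k₁`, `k−k₂`, `k−k₃` groups and `χ₄` contains `N−k` groups. -/
def validConfig (n N m k k1 k2 k3 : ℕ) (grp : Fin n → Fin N) (chi : Fin N → Fin 4) : Prop :=
  (∀ q : Fin N,
      (chi q = 3 → (Finset.univ.filter fun i => grp i = q).card = m) ∧
      (chi q ≠ 3 → (Finset.univ.filter fun i => grp i = q).card = m - 1)) ∧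
  (Finset.univ.filter fun q => chi q = 0).card = k - k1 ∧
  (Finset.univ.filter fun q => chi q = 1).card = k - k2 ∧
  (Finset.univ.filter fun q => chi q = 2).card = k - k3 ∧
  (Finset.univ.filter fun q => chi q = 3).card = N - k

section BasicMonomial

variable {n N : ℕ} (grp : Fin n → Fin N) (chi : Fin N → Fin 4) (x : Fin 3 → ℝ) {u : Fin n → ℝ}

theorem basicMonomial_eq_zero_of_grp_eq {i j : Fin n} (hij : i ≠ j) (hgrp : grp i = grp j)
    (hu : u i = u j) : basicMonomial n N grp chi x u = 0 := by
  wlog hlt : i < j generalizing i j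
  · exact this hij.symm hgrp.symm hu.symm (hij.lt_or_gt.resolve_left hlt)
  refine mul_eq_zero_of_left (prod_eq_zero (mem_univ i) (prod_eq_zero (mem_univ j) ?_)) _
  rw [if_pos ⟨hlt, hgrp⟩, hu, sub_self, zero_pow two_ne_zero]

theorem basicMonomial_eq_zero_of_chi_ne {a : Fin 3} {j : Fin n} (hu : u j = x a)
    (ha : chi (grp j) ≠ a.castSucc) (h3 : chi (grp j) ≠ 3) :
    basicMonomial n N grp chi x u = 0 := by
  refine mul_eq_zero_of_right _ (prod_eq_zero (mem_univ j) ?_)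
  generalize chi (grp j) = c at ha h3
  fin_cases a <;> fin_cases c <;> simp_all

theorem basicMonomial_eq_zero_of_card_lt {a : Fin 3} {T : Finset (Fin n)}
    (hu : ∀ j ∈ T, u j = x a) (hT : #{q | chi q = a.castSucc ∨ chi q = 3} < #T) :
    basicMonomial n N grp chi x u = 0 := by
  by_cases hmaps : ∀ j ∈ T, chi (grp j) = a.castSucc ∨ chi (grp j) = 3
  · obtain ⟨i, hi, j, hj, hij, hgrp⟩ :=
      exists_ne_map_eq_of_card_lt_of_maps_to hT fun j hj => by simpa using hmaps j hj
    exact basicMonomial_eq_zero_of_grp_eq grp chi x hij hgrp ((hu i hi).trans (hu j hj).symm)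
  · push Not at hmaps
    obtain ⟨j, hj, hchi⟩ := hmaps
    exact basicMonomial_eq_zero_of_chi_ne grp chi x (hu j hj) hchi.1 hchi.2

end BasicMonomial

theorem symMonomial_eq_zero_of_card_lt {n N : ℕ} (grp : Fin n → Fin N) (chi : Fin N → Fin 4)
    (x : Fin 3 → ℝ) {t : Fin n → ℝ} {a : Fin 3} {T : Finset (Fin n)}
    (ht : ∀ j ∈ T, t j = x a) (hT : #{q | chi q = a.castSucc ∨ chi q = 3} < #T) :
    symMonomial n N grp chi x t = 0 := by
  refine sum_eq_zero fun σ _ =>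
    basicMonomial_eq_zero_of_card_lt grp chi x (T := T.map σ.symm.toEmbedding) ?_
      (by rwa [card_map])
  simp only [mem_map_equiv, Equiv.symm_symm, Function.comp_apply]
  exact fun j hj => ht _ hj

theorem card_filter_eq_or_eq {α β : Type*} [Fintype α] [DecidableEq β] (f : α → β) {b c : β}
    (hbc : b ≠ c) : #{x | f x = b ∨ f x = c} = #{x | f x = b} + #{x | f x = c} := by
  classical
  rw [filter_or,
    card_union_of_disjoint (disjoint_filter.mpr fun _ _ hb hc => hbc (hb.symm.trans hc))]

theorem validConfig.card_chi_castSucc {n N m k k1 k2 k3 : ℕ} {grp : Fin n → Fin N}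
    {chi : Fin N → Fin 4} (hcfg : validConfig n N m k k1 k2 k3 grp chi) (a : Fin 3) :
    #{q | chi q = a.castSucc} = k - ![k1, k2, k3] a := by
  obtain ⟨-, h0, h1, h2, -⟩ := hcfg
  fin_cases a
  exacts [h0, h1, h2]

theorem symMonomial_cluster_vanishing_at_special_points_general (N m k k1 k2 k3 : ℕ)
    (hk : k ≤ N) (hk1 : k1 ≤ k) (hk2 : k2 ≤ k) (hk3 : k3 ≤ k)
    (grp : Fin (m * N - k) → Fin N) (chi : Fin N → Fin 4)
    (hcfg : validConfig (m * N - k) N m k k1 k2 k3 grp chi)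
    (a : Fin 3) (hna : N + 1 ≤ m * N - k + ![k1, k2, k3] a)
    (x : Fin 3 → ℝ) (t : Fin (m * N - k) → ℝ)
    (ht : ∀ i : Fin (m * N - k), (i : ℕ) < N + 1 - ![k1, k2, k3] a → t i = x a) :
    symMonomial (m * N - k) N grp chi x t = 0 := by
  have hka : ![k1, k2, k3] a ≤ k := by fin_cases a <;> assumption
  have hχ₄ : #{q | chi q = 3} = N - k := hcfg.2.2.2.2
  refine symMonomial_eq_zero_of_card_lt grp chi x
    (T := {i | (i : ℕ) < N + 1 - ![k1, k2, k3] a}) (fun i hi => ht i (by simpa using hi)) ?_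
  rw [card_filter_eq_or_eq chi (c := 3) (Fin.castSucc_ne_last a), hcfg.card_chi_castSucc, hχ₄,
    Fin.card_filter_val_lt]
  omega

/-- Clustering at the special points: the symmetrized parafermionic polynomial
`𝐏_m^{(N|k₁,k₂,k₃)}(x₁,x₂,x₃|t)` vanishes when `N+1−k_j` of the `t`-variables are set
equal to `x_j`, for each `j ∈ {1,2,3}`. -/
theorem symMonomial_cluster_vanishing_at_special_points (N m k k1 k2 k3 : ℕ)
    (hN : 1 ≤ N) (hm : 1 ≤ m)
    (hk : k ≤ N) (hk1 : k1 ≤ k) (hk2 : k2 ≤ k) (hk3 : k3 ≤ k)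
    (hsum : k1 + k2 + k3 = 2 * k)
    (grp : Fin (m * N - k) → Fin N) (chi : Fin N → Fin 4)
    (hcfg : validConfig (m * N - k) N m k k1 k2 k3 grp chi)
    (a : Fin 3) (hna : N + 1 ≤ m * N - k + ![k1, k2, k3] a)
    (x : Fin 3 → ℝ) (t : Fin (m * N - k) → ℝ)
    (ht : ∀ i : Fin (m * N - k), (i : ℕ) < N + 1 - ![k1, k2, k3] a → t i = x a) :
    symMonomial (m * N - k) N grp chi x t = 0 :=
  symMonomial_cluster_vanishing_at_special_points_general N m k k1 k2 k3 hk hk1 hk2 hk3 grp chi hcfg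
    a hna x t ht
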